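/- arXiv:math/0202114 — 4 statements merged into one kernel-verified Lean document; each statement's English description precedes it below -/
import Mathlib

section
/- Let Z and K be compact Hausdorff spaces with K zero-dimensional (dim K = 0). Then the set of continuous maps g : Z × K → [0,1] such that g({z} × K) is a finite set for every z ∈ Z is dense in C(Z × K, [0,1]) with the uniform convergence topology. -/
/-!
Currying turns `g : C(Z × K, I)` into a continuous map `G : K → C(Z, I)`, and `C(Z, I)` carries
the uniform metric because `Z` is compact. Since `K` has covering dimension zero, the cover of `K`
by the preimages of small balls under `G` is refined by a partition into open sets. Sending each
point to a chosen point of its block is a locally constant map `f : K → K` with `G ∘ f` uniformly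
close to `G`, so `(z, k) ↦ g (z, f k)` approximates `g`; its slices factor through `f`, which has
finite range on the compact space `K`.
-/

open Set Metric

noncomputable section

/-- Covering dimension of a topological space is at most `n`: every open cover admits an
open refinement covering the space in which every point lies in at most `n+1` members. -/
def coveringDimLE (X : Type*) [TopologicalSpace X] (n : ℕ) : Prop :=
  ∀ U : Set (Set X), (∀ u ∈ U, IsOpen u) → ⋃₀ U = Set.univ →
    ∃ V : Set (Set X), (∀ v ∈ V, IsOpen v) ∧ ⋃₀ V = Set.univ ∧
      (∀ v ∈ V, ∃ u ∈ U, v ⊆ u) ∧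
      ∀ x : X, {v | v ∈ V ∧ x ∈ v}.Finite ∧ {v | v ∈ V ∧ x ∈ v}.ncard ≤ n + 1

/-- The cube `I^n` with the Euclidean metric. -/
def Cube (n : ℕ) := {x : EuclideanSpace ℝ (Fin n) // ∀ i, x i ∈ Set.Icc (0:ℝ) 1}

noncomputable instance (n : ℕ) : MetricSpace (Cube n) :=
  inferInstanceAs (MetricSpace {x : EuclideanSpace ℝ (Fin n) // ∀ i, x i ∈ Set.Icc (0:ℝ) 1})

/-- A perfect map: continuous, closed, with compact fibers. -/
def IsPerfectMap {X Y : Type*} [TopologicalSpace X] [TopologicalSpace Y] (f : X → Y) : Prop :=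
  Continuous f ∧ IsClosedMap f ∧ ∀ y : Y, IsCompact (f ⁻¹' {y})

/-- Openness in the source limitation (fine) topology on `C(X, K)`. -/
def SLOpen {X K : Type*} [TopologicalSpace X] [MetricSpace K] (U : Set C(X, K)) : Prop :=
  ∀ g ∈ U, ∃ α : C(X, ℝ), (∀ x, 0 < α x) ∧
    {h : C(X, K) | ∀ x, dist (h x) (g x) ≤ α x} ⊆ U

/-- Density in the source limitation (fine) topology on `C(X, K)`. -/
def SLDense {X K : Type*} [TopologicalSpace X] [MetricSpace K] (H : Set C(X, K)) : Prop :=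
  ∀ g : C(X, K), ∀ α : C(X, ℝ), (∀ x, 0 < α x) →
    ∃ h ∈ H, ∀ x, dist (h x) (g x) ≤ α x

/-- A `C`-space: for every sequence of open covers there is a sequence of pairwise disjoint
open families, the `k`-th refining the `k`-th cover, whose union covers the space. -/
def IsCSpace (Y : Type*) [TopologicalSpace Y] : Prop :=
  ∀ ω : ℕ → Set (Set Y), (∀ k, (∀ u ∈ ω k, IsOpen u) ∧ ⋃₀ ω k = Set.univ) →
    ∃ γ : ℕ → Set (Set Y),
      (∀ k, (∀ v ∈ γ k, IsOpen v) ∧ (∀ v ∈ γ k, ∃ u ∈ ω k, v ⊆ u) ∧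
        (γ k).Pairwise (Disjoint : Set Y → Set Y → Prop)) ∧
      ⋃₀ (⋃ k, γ k) = Set.univ

theorem exists_isLocallyConstant_partition_of_coveringDimLE_zero {X : Type*}
    [TopologicalSpace X] (hX : coveringDimLE X 0) {U : Set (Set X)} (hUo : ∀ u ∈ U, IsOpen u)
    (hUc : ⋃₀ U = univ) :
    ∃ v : X → Set X, IsLocallyConstant v ∧ (∀ x, x ∈ v x) ∧ ∀ x, ∃ u ∈ U, v x ⊆ u := by
  obtain ⟨V, hVo, hVc, hVU, hVord⟩ := hX U hUo hUc
  have hcover : ∀ x, ∃ w ∈ V, x ∈ w := sUnion_eq_univ_iff.1 hVc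
  choose v hvV hxv using hcover
  have hv_unique : ∀ x, ∀ w ∈ V, x ∈ w → w = v x := fun x w hw hxw =>
    (ncard_le_one_iff (hVord x).1).1 (hVord x).2 ⟨hw, hxw⟩ ⟨hvV x, hxv x⟩
  refine ⟨v, (IsLocallyConstant.iff_exists_open v).2 fun x => ?_, hxv, fun x => hVU _ (hvV x)⟩
  exact ⟨v x, hVo _ (hvV x), hxv x, fun x' hx' => (hv_unique x' _ (hvV x) hx').symm⟩

theorem exists_isLocallyConstant_dist_lt_of_coveringDimLE_zero {K Y : Type*}
    [TopologicalSpace K] [PseudoMetricSpace Y] (hK : coveringDimLE K 0) {G : K → Y}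
    (hG : Continuous G) {ε : ℝ} (hε : 0 < ε) :
    ∃ f : K → K, IsLocallyConstant f ∧ ∀ k, dist (G (f k)) (G k) < ε := by
  obtain ⟨v, hv, hvmem, hvsub⟩ := exists_isLocallyConstant_partition_of_coveringDimLE_zero hK
    (U := range fun k₀ => G ⁻¹' ball (G k₀) (ε / 2))
    (forall_mem_range.2 fun k₀ => isOpen_ball.preimage hG)
    (sUnion_eq_univ_iff.2 fun k => ⟨_, mem_range_self k, mem_ball_self (half_pos hε)⟩)
  -- `f k` only depends on the block `v k`: the `Nonempty` instance is a proof, hence irrelevant.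
  let f : K → K := fun k => @Classical.epsilon K ⟨k⟩ (· ∈ v k)
  have hfv : ∀ k, f k ∈ v k := fun k => @Classical.epsilon_spec K (· ∈ v k) ⟨k, hvmem k⟩
  refine ⟨f, (IsLocallyConstant.iff_exists_open f).2 fun k => ?_, fun k => ?_⟩
  · refine ⟨{k' | v k' = v k}, hv.isOpen_fiber _, rfl, fun k' hk' => ?_⟩
    simp only [f, show v k' = v k from hk']
  · obtain ⟨_, ⟨k₀, rfl⟩, hsub⟩ := hvsub k
    calc dist (G (f k)) (G k) ≤ dist (G (f k)) (G k₀) + dist (G k) (G k₀) :=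
          dist_triangle_right _ _ _
      _ < ε / 2 + ε / 2 := add_lt_add (hsub (hfv k)) (hsub (hvmem k))
      _ = ε := add_halves ε

theorem stmt5_general {Z K : Type*} [TopologicalSpace Z] [CompactSpace Z]
    [TopologicalSpace K] [CompactSpace K]
    (hK : coveringDimLE K 0) :
    Dense {g : C(Z × K, unitInterval) |
      ∀ z : Z, (Set.range fun k : K => g (z, k)).Finite} := by
  refine Metric.dense_iff.2 fun g r hr => ?_
  let G : C(K, C(Z, unitInterval)) := (g.comp ContinuousMap.prodSwap).curry
  obtain ⟨f, hf, hfG⟩ :=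
    exists_isLocallyConstant_dist_lt_of_coveringDimLE_zero hK G.continuous hr
  let h : C(Z × K, unitInterval) := g.comp ((ContinuousMap.id Z).prodMap ⟨f, hf.continuous⟩)
  refine ⟨h, mem_ball.2 ((ContinuousMap.dist_lt_iff hr).2 fun ⟨z, k⟩ => ?_), fun z => ?_⟩
  · exact (ContinuousMap.dist_apply_le_dist (f := G (f k)) (g := G k) z).trans_lt (hfG k)
  · exact (hf.comp fun k => g (z, k)).range_finite

theorem stmt5 {Z K : Type*} [TopologicalSpace Z] [CompactSpace Z] [T2Space Z]
    [TopologicalSpace K] [CompactSpace K] [T2Space K]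
    (hK : coveringDimLE K 0) :
    Dense {g : C(Z × K, unitInterval) |
      ∀ z : Z, (Set.range fun k : K => g (z, k)).Finite} :=
  stmt5_general hK
end
end

section
/- Let Z and K be compact Hausdorff spaces and K₀ = ⋃_{i=1}^∞ K_i with each K_i a closed zero-dimensional subset of K. Then the set A = {g ∈ C(Z × K, [0,1]) : dim g({z} × K₀) = 0 for every z ∈ Z} is a dense G_δ subset of C(Z × K, [0,1]) with the uniform convergence topology. -/
open Set Metric

noncomputable section

lemma coveringDimLE_of_homeomorph {X Y : Type*} [TopologicalSpace X] [TopologicalSpace Y]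
    (e : X ≃ₜ Y) {n : ℕ} (h : coveringDimLE X n) : coveringDimLE Y n := by
  intro U hUo hUc
  obtain ⟨V, hVo, hVc, hVr, hVm⟩ := h ((fun u => e ⁻¹' u) '' U)
    (by rintro _ ⟨u, hu, rfl⟩; exact (hUo u hu).preimage e.continuous)
    (by
      rw [Set.sUnion_image]
      ext x
      simp only [mem_iUnion, mem_univ, iff_true]
      have : e x ∈ ⋃₀ U := hUc ▸ mem_univ _
      obtain ⟨u, hu, hx⟩ := this
      exact ⟨u, hu, hx⟩)
  refine ⟨(fun v => e.symm ⁻¹' v) '' V, ?_, ?_, ?_, ?_⟩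
  · rintro _ ⟨v, hv, rfl⟩; exact (hVo v hv).preimage e.symm.continuous
  · rw [Set.sUnion_image]
    ext y
    simp only [mem_iUnion, mem_univ, iff_true]
    have : e.symm y ∈ ⋃₀ V := hVc ▸ mem_univ _
    obtain ⟨v, hv, hy⟩ := this
    exact ⟨v, hv, hy⟩
  · rintro _ ⟨v, hv, rfl⟩
    obtain ⟨_, ⟨u, hu, rfl⟩, hvu⟩ := hVr v hv
    refine ⟨u, hu, ?_⟩
    intro y hy
    have := hvu hy
    simpa using this
  · intro y
    have hinj : Function.Injective (fun v : Set X => e.symm ⁻¹' v) :=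
      Set.preimage_injective.mpr e.symm.surjective
    have hset : {w | w ∈ (fun v => e.symm ⁻¹' v) '' V ∧ y ∈ w}
        = (fun v => e.symm ⁻¹' v) '' {v | v ∈ V ∧ e.symm y ∈ v} := by
      ext w
      constructor
      · rintro ⟨⟨v, hv, rfl⟩, hy⟩
        exact ⟨v, ⟨hv, hy⟩, rfl⟩
      · rintro ⟨v, ⟨hv, hy⟩, rfl⟩
        exact ⟨⟨v, hv, rfl⟩, hy⟩
    obtain ⟨hfin, hcard⟩ := hVm (e.symm y)
    constructor
    · rw [hset]; exact hfin.image _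
    · rw [hset, Set.ncard_image_of_injective _ hinj]; exact hcard

lemma not_coveringDimLE_zero_of_Icc_subset {S : Set ℝ} {a b : ℝ} (hab : a < b)
    (hsub : Icc a b ⊆ S) : ¬ coveringDimLE ↥S 0 := by
  intro h
  set u₁ : Set ↥S := Subtype.val ⁻¹' (Iio b) with hu₁
  set u₂ : Set ↥S := Subtype.val ⁻¹' (Ioi a) with hu₂
  obtain ⟨V, hVo, hVc, hVr, hVm⟩ := h {u₁, u₂}
    (by rintro u (rfl | rfl)
        · exact isOpen_Iio.preimage continuous_subtype_val
        · exact isOpen_Ioi.preimage continuous_subtype_val)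
    (by ext x
        simp only [sUnion_insert, sUnion_singleton, mem_union, mem_univ, iff_true, hu₁, hu₂,
          mem_preimage, mem_Iio, mem_Ioi]
        rcases lt_or_ge (x : ℝ) b with hx | hx
        · exact Or.inl hx
        · exact Or.inr (hab.trans_le hx))
  set C : Set ↥S := Subtype.val ⁻¹' (Icc a b) with hCdef
  have hC : IsPreconnected C := by
    rw [← Topology.IsInducing.subtypeVal.isPreconnected_image]
    have himg : Subtype.val '' C = Icc a b := by
      rw [hCdef, Subtype.image_preimage_coe, inter_eq_right.mpr hsub]
    rw [himg]
    exact isPreconnected_Icc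
  have ha : a ∈ S := hsub ⟨le_refl a, hab.le⟩
  have hb : b ∈ S := hsub ⟨hab.le, le_refl b⟩
  have haC : (⟨a, ha⟩ : ↥S) ∈ C := ⟨le_refl a, hab.le⟩
  have hbC : (⟨b, hb⟩ : ↥S) ∈ C := ⟨hab.le, le_refl b⟩
  obtain ⟨v, hv, hav⟩ : ∃ v ∈ V, (⟨a, ha⟩ : ↥S) ∈ v := by
    have : (⟨a, ha⟩ : ↥S) ∈ ⋃₀ V := hVc ▸ mem_univ _
    exact this
  -- C ⊆ v
  have hCv : C ⊆ v := by
    by_contra hnc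
    obtain ⟨x, hxC, hxv⟩ := not_subset.mp hnc
    have hxw : x ∈ ⋃₀ (V \ {v}) := by
      have : x ∈ ⋃₀ V := hVc ▸ mem_univ _
      obtain ⟨v', hv', hxv'⟩ := this
      exact ⟨v', ⟨hv', fun hh => hxv (hh ▸ hxv')⟩, hxv'⟩
    have hwo : IsOpen (⋃₀ (V \ {v})) := isOpen_sUnion fun t ht => hVo t ht.1
    obtain ⟨y, hyC, hyv, hyw⟩ := hC v (⋃₀ (V \ {v})) (hVo v hv) hwo
      (fun z _ => by
        have : z ∈ ⋃₀ V := hVc ▸ mem_univ _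
        obtain ⟨v', hv', hzv'⟩ := this
        by_cases hvv : v' = v
        · exact Or.inl (hvv ▸ hzv')
        · exact Or.inr ⟨v', ⟨hv', hvv⟩, hzv'⟩)
      ⟨⟨a, ha⟩, haC, hav⟩ ⟨x, hxC, hxw⟩
    obtain ⟨v', ⟨hv', hne⟩, hyv'⟩ := hyw
    have hpair : {t | t ∈ V ∧ y ∈ t} ⊇ {v, v'} := by
      rintro t (rfl | rfl)
      · exact ⟨hv, hyv⟩
      · exact ⟨hv', hyv'⟩
    have h2 : 2 ≤ ({t | t ∈ V ∧ y ∈ t}).ncard := by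
      rw [← Set.ncard_pair (Ne.symm hne)]
      exact Set.ncard_le_ncard hpair (hVm y).1
    have := (hVm y).2
    omega
  obtain ⟨u, hu, hvu⟩ := hVr v hv
  rcases hu with rfl | rfl
  · have := hvu (hCv hbC)
    simp [hu₁] at this
  · have := hvu (hCv haC)
    simp [hu₂] at this

lemma coveringDimLE_zero_of_no_interval {S : Set ℝ}
    (hS : ∀ a b : ℝ, a < b → ¬ Icc a b ⊆ S) : coveringDimLE ↥S 0 := by
  have hdense : ∀ a b : ℝ, a < b → ∃ c, a < c ∧ c < b ∧ c ∉ S := by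
    intro a b hab
    have h3 : a + (b - a)/3 < b - (b - a)/3 := by linarith
    obtain ⟨c, hc1, hc2⟩ := not_subset.mp (hS _ _ h3)
    obtain ⟨h1, h2⟩ := hc1
    exact ⟨c, by linarith, by linarith, hc2⟩
  intro U hUo hUc
  -- for each point, a clopen neighborhood inside some member of U
  have key : ∀ x : ↥S, ∃ (w u : Set ↥S), IsOpen w ∧ IsClosed w ∧ x ∈ w ∧ u ∈ U ∧ w ⊆ u := by
    intro x
    obtain ⟨u, hu, hxu⟩ : ∃ u ∈ U, x ∈ u := by
      have : x ∈ ⋃₀ U := hUc ▸ mem_univ _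
      exact this
    obtain ⟨O, hOo, hOu⟩ := isOpen_induced_iff.mp (hUo u hu)
    obtain ⟨δ, hδ, hball⟩ := Metric.isOpen_iff.mp hOo (x : ℝ) (by rw [← hOu] at hxu; exact hxu)
    obtain ⟨c, hc1, hc2, hcS⟩ := hdense ((x : ℝ) - δ) (x : ℝ) (by linarith)
    obtain ⟨d, hd1, hd2, hdS⟩ := hdense (x : ℝ) ((x : ℝ) + δ) (by linarith)
    refine ⟨Subtype.val ⁻¹' (Ioo c d), u, isOpen_Ioo.preimage continuous_subtype_val, ?_, ?_, hu, ?_⟩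
    · have : Subtype.val ⁻¹' (Ioo c d) = (Subtype.val ⁻¹' (Icc c d) : Set ↥S) := by
        ext y
        simp only [mem_preimage, mem_Ioo, mem_Icc]
        constructor
        · rintro ⟨h1, h2⟩; exact ⟨h1.le, h2.le⟩
        · rintro ⟨h1, h2⟩
          refine ⟨lt_of_le_of_ne h1 ?_, lt_of_le_of_ne h2 ?_⟩
          · intro hh; exact hcS (hh ▸ y.2)
          · intro hh; exact hdS (hh ▸ y.2)
      rw [this]
      exact isClosed_Icc.preimage continuous_subtype_val
    · exact ⟨hc2, hd1⟩
    · intro y hy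
      rw [← hOu]
      apply hball
      obtain ⟨h1, h2⟩ := hy
      rw [mem_ball, Real.dist_eq, abs_lt]
      constructor <;> [linarith; linarith]
  choose W Uof hWo hWcl hxW hUof hWU using key
  obtain ⟨T, hTc, hTU⟩ := TopologicalSpace.isOpen_iUnion_countable W hWo
  have hTuniv : ⋃ x ∈ T, W x = univ := by
    rw [hTU]
    exact eq_univ_of_forall fun x => mem_iUnion.mpr ⟨x, hxW x⟩
  rcases T.eq_empty_or_nonempty with rfl | hTne
  · -- S is empty
    have hempty : IsEmpty ↥S := by
      rw [← univ_eq_empty_iff, ← hTuniv]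
      simp
    refine ⟨∅, by simp, ?_, by simp, ?_⟩
    · rw [sUnion_empty]; exact (univ_eq_empty_iff.mpr hempty).symm
    · intro x; exact absurd trivial (hempty.elim x)
  obtain ⟨f, hf⟩ := Set.Countable.exists_eq_range hTc hTne
  -- disjointify
  set A : ℕ → Set ↥S := fun n => W (f n) ∩ ⋂ m ∈ Finset.range n, (W (f m))ᶜ with hA
  have hAo : ∀ n, IsOpen (A n) := fun n =>
    (hWo _).inter (isOpen_biInter_finset fun m _ => (hWcl (f m)).isOpen_compl)
  have hAdis : ∀ m n, m < n → Disjoint (A m) (A n) := by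
    intro m n hmn
    refine Set.disjoint_left.mpr fun x hxm hxn => ?_
    have : x ∈ (W (f m))ᶜ := by
      have := hxn.2
      simp only [Finset.mem_range, mem_iInter] at this
      exact this m hmn
    exact this hxm.1
  have hAcov : ∀ x : ↥S, ∃ n, x ∈ A n := by
    intro x
    have hx : x ∈ ⋃ y ∈ T, W y := hTuniv ▸ mem_univ _
    have hex : ∃ n, x ∈ W (f n) := by
      obtain ⟨y, hy, hxy⟩ := mem_iUnion₂.mp hx
      rw [hf] at hy
      obtain ⟨n, rfl⟩ := hy
      exact ⟨n, hxy⟩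
    classical
    refine ⟨Nat.find hex, Nat.find_spec hex, ?_⟩
    simp only [Finset.mem_range, mem_iInter, mem_compl_iff]
    intro m hm
    exact Nat.find_min hex hm
  refine ⟨{v | (∃ n, A n = v) ∧ v.Nonempty}, ?_, ?_, ?_, ?_⟩
  · rintro v ⟨⟨n, rfl⟩, _⟩; exact hAo n
  · apply eq_univ_of_forall
    intro x
    obtain ⟨n, hn⟩ := hAcov x
    exact ⟨A n, ⟨⟨n, rfl⟩, ⟨x, hn⟩⟩, hn⟩
  · rintro v ⟨⟨n, rfl⟩, _⟩
    exact ⟨Uof (f n), hUof (f n), fun y hy => hWU (f n) hy.1⟩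
  · intro x
    have hss : {v | v ∈ {v | (∃ n, A n = v) ∧ v.Nonempty} ∧ x ∈ v}.Subsingleton := by
      rintro v₁ ⟨⟨⟨n₁, rfl⟩, _⟩, hx₁⟩ v₂ ⟨⟨⟨n₂, rfl⟩, _⟩, hx₂⟩
      rcases lt_trichotomy n₁ n₂ with h | h | h
      · exact absurd (Set.disjoint_left.mp (hAdis _ _ h) hx₁ hx₂) (fun h => h)
      · rw [h]
      · exact absurd (Set.disjoint_left.mp (hAdis _ _ h) hx₂ hx₁) (fun h => h)
    refine ⟨hss.finite, ?_⟩
    rcases hss.eq_empty_or_singleton with h | ⟨y, h⟩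
    · rw [h]; simp
    · rw [h]; simp

-- the homeo between a set of unitInterval and its real image
noncomputable def valHomeo (S : Set unitInterval) :
    ↥S ≃ₜ ↥(Subtype.val '' S : Set ℝ) := by
  have hemb : Topology.IsEmbedding (fun x : ↥S => ((x : unitInterval) : ℝ)) :=
    Topology.IsEmbedding.subtypeVal.comp Topology.IsEmbedding.subtypeVal
  have hrange : Set.range (fun x : ↥S => ((x : unitInterval) : ℝ))
      = (Subtype.val '' S : Set ℝ) := by
    rw [← Set.image_univ, ← Set.image_image, Set.image_univ, Subtype.range_val]
  exact hemb.toHomeomorph.trans (Homeomorph.setCongr hrange)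

lemma coveringDimLE_val_image_iff (S : Set unitInterval) :
    coveringDimLE ↥S 0 ↔ coveringDimLE ↥(Subtype.val '' S : Set ℝ) 0 :=
  ⟨fun h => coveringDimLE_of_homeomorph (valHomeo S) h,
   fun h => coveringDimLE_of_homeomorph (valHomeo S).symm h⟩

-- Baire argument
lemma no_interval_of_forall {T : ℕ → Set ℝ} (hcl : ∀ i, IsClosed (T i))
    (hbd : ∀ i, T i ⊆ Icc (0:ℝ) 1)
    (h : ∀ i n : ℕ, ¬ ∃ a ∈ Icc (0:ℝ) 1, Icc a (a + 1/(n+1)) ⊆ T i)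
    {a b : ℝ} (hab : a < b) : ¬ Icc a b ⊆ ⋃ i, T i := by
  intro hsub
  haveI : Nonempty ↥(Icc a b) := ⟨⟨a, le_refl a, hab.le⟩⟩
  haveI : CompleteSpace ↥(Icc a b) := isClosed_Icc.completeSpace_coe
  set F : ℕ → Set ↥(Icc a b) := fun i => Subtype.val ⁻¹' (T i) with hF
  have hFcl : ∀ i, IsClosed (F i) := fun i => (hcl i).preimage continuous_subtype_val
  have hFun : ⋃ i, F i = univ := by
    apply eq_univ_of_forall
    intro x
    have : (x : ℝ) ∈ ⋃ i, T i := hsub x.2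
    obtain ⟨i, hi⟩ := mem_iUnion.mp this
    exact mem_iUnion.mpr ⟨i, hi⟩
  obtain ⟨i, x, hx⟩ := nonempty_interior_of_iUnion_of_closed hFcl hFun
  obtain ⟨o, hoF, hoopen, hxoo⟩ := mem_interior.mp hx
  obtain ⟨O, hOo, rfl⟩ := isOpen_induced_iff.mp hoopen
  obtain ⟨δ, hδ, hball⟩ := Metric.isOpen_iff.mp hOo (x : ℝ) hxoo
  have hxm := x.2
  set c : ℝ := max a ((x : ℝ) - δ/2) with hc
  set d : ℝ := min b ((x : ℝ) + δ/2) with hd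
  have hcd : c < d := by
    rw [hc, hd, max_lt_iff, lt_min_iff, lt_min_iff]
    refine ⟨⟨hab, by linarith [hxm.1]⟩, ⟨by linarith [hxm.2], by linarith⟩⟩
  have hsubT : Icc c d ⊆ T i := by
    intro y hy
    have hyI : y ∈ Icc a b := ⟨le_trans (le_max_left _ _) hy.1,
      le_trans hy.2 (min_le_left _ _)⟩
    have hyb : y ∈ ball (x : ℝ) δ := by
      rw [mem_ball, Real.dist_eq, abs_lt]
      constructor
      · have := hy.1
        rw [hc] at this
        have := le_trans (le_max_right _ _) this
        linarith
      · have := hy.2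
        rw [hd] at this
        have := le_trans this (min_le_right _ _)
        linarith
    exact hoF (show (⟨y, hyI⟩ : ↥(Icc a b)) ∈ Subtype.val ⁻¹' O from hball hyb)
  obtain ⟨n, hn⟩ := exists_nat_one_div_lt (show (0:ℝ) < d - c by linarith)
  apply h i n
  refine ⟨c, ?_, ?_⟩
  · have : c ∈ T i := hsubT ⟨le_refl c, hcd.le⟩
    exact hbd i this
  · intro y hy
    apply hsubT
    exact ⟨hy.1, le_trans hy.2 (by linarith)⟩

section
variable {Z K : Type*} [TopologicalSpace Z] [CompactSpace Z] [T2Space Z]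
  [TopologicalSpace K] [CompactSpace K] [T2Space K]

def rimg (g : C(Z × K, unitInterval)) (z : Z) (E : Set K) : Set ℝ :=
  (fun k => (g (z, k) : ℝ)) '' E

lemma dense_finite_img (E : Set K) (hE : IsClosed E) (hdimE : coveringDimLE ↥E 0)
    (g : C(Z × K, unitInterval)) {ε : ℝ} (hε : 0 < ε) :
    ∃ h : C(Z × K, unitInterval), dist h g < ε ∧ ∀ z, (rimg h z E).Finite := by
  classical
  set gr : C(Z × K, ℝ) := ⟨fun p => ((g p : ℝ)), continuous_subtype_val.comp g.continuous⟩
    with hgr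
  set G : C(K, C(Z, ℝ)) := ContinuousMap.curry (gr.comp ContinuousMap.prodSwap) with hG
  have hGkz : ∀ (k : K) (z : Z), G k z = gr (z, k) := fun _ _ => rfl
  set O : K → Set K := fun c => G ⁻¹' (ball (G c) (ε/4)) with hO
  have hOopen : ∀ c, IsOpen (O c) := fun c => isOpen_ball.preimage G.continuous
  have hmemO : ∀ c, c ∈ O c := fun c => mem_ball_self (by positivity)
  haveI : CompactSpace ↥E := isCompact_iff_compactSpace.mp hE.isCompact
  obtain ⟨V, hVo, hVc, hVr, hVm⟩ := hdimE {u : Set ↥E | ∃ c ∈ E, u = Subtype.val ⁻¹' (O c)}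
    (by rintro u ⟨c, _, rfl⟩; exact (hOopen c).preimage continuous_subtype_val)
    (eq_univ_of_forall fun x => ⟨Subtype.val ⁻¹' (O ↑x), ⟨↑x, x.2, rfl⟩, hmemO _⟩)
  -- distinct members of V are disjoint
  have hVd : ∀ v ∈ V, ∀ w ∈ V, v ≠ w → ∀ x, x ∈ v → x ∈ w → False := by
    intro v hv w hw hne x hxv hxw
    have hpair : {u | u ∈ V ∧ x ∈ u} ⊇ {v, w} := by
      rintro u (rfl | rfl)
      · exact ⟨hv, hxv⟩
      · exact ⟨hw, hxw⟩
    have h2 : 2 ≤ ({u | u ∈ V ∧ x ∈ u}).ncard := by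
      rw [← Set.ncard_pair hne]
      exact Set.ncard_le_ncard hpair (hVm x).1
    have := (hVm x).2
    omega
  -- finite subcover
  have hcov : (univ : Set ↥E) ⊆ ⋃ v : V, (v : Set ↥E) := by
    rw [← sUnion_eq_iUnion, hVc]
  obtain ⟨t, ht⟩ := isCompact_univ.elim_finite_subcover (fun v : V => (v : Set ↥E))
    (fun v => hVo v v.2) hcov
  -- choose centers
  have href : ∀ v : V, ∃ c, c ∈ E ∧ (v : Set ↥E) ⊆ Subtype.val ⁻¹' (O c) := by
    intro v
    obtain ⟨u, ⟨c, hc, rfl⟩, hsub⟩ := hVr v v.2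
    exact ⟨c, hc, hsub⟩
  choose cv hcvE hcvsub using href
  -- piece function
  have hpc : ∀ k : ↥E, ∃ v : V, v ∈ t ∧ k ∈ (v : Set ↥E) := by
    intro k
    have := ht (mem_univ k)
    simp only [mem_iUnion] at this
    obtain ⟨v, hv, hk⟩ := this
    exact ⟨v, hv, hk⟩
  choose piece hpt hpmem using hpc
  have hpiece_eq : ∀ (k : ↥E) (v : V), k ∈ (v : Set ↥E) → piece k = v := by
    intro k v hk
    by_contra hne
    exact hVd _ (piece k).2 _ v.2 (fun hh => hne (Subtype.ext hh)) k (hpmem k) hk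
  -- locally constant selection
  set F : ↥E → C(Z, ℝ) := fun k => G (cv (piece k)) with hF
  have hFlc : IsLocallyConstant F := by
    rw [IsLocallyConstant.iff_exists_open]
    intro x
    refine ⟨(piece x : Set ↥E), hVo _ (piece x).2, hpmem x, fun y hy => ?_⟩
    simp only [hF, hpiece_eq y (piece x) hy]
  have hFcont : Continuous F := hFlc.continuous
  -- the difference function on Z × E
  have hdc : Continuous (fun p : Z × ↥E => F p.2 p.1 - gr (p.1, (p.2 : K))) := by
    apply Continuous.sub
    · exact continuous_eval.comp ((hFcont.comp continuous_snd).prodMk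
        continuous_fst)
    · exact gr.continuous.comp (continuous_fst.prodMk
        (continuous_subtype_val.comp continuous_snd))
  set d : C(Z × ↥E, ℝ) := ⟨_, hdc⟩ with hd
  have hdbound : ∀ p : Z × ↥E, |d p| ≤ ε/4 := by
    rintro ⟨z, k⟩
    have hk : (k : K) ∈ O (cv (piece k)) := hcvsub (piece k) (hpmem k)
    have hdist : dist (G (k : K)) (G (cv (piece k))) < ε/4 := hk
    have : |G (cv (piece k)) z - G (k : K) z| ≤ dist (G (cv (piece k))) (G (k : K)) := by
      rw [← Real.dist_eq]
      exact ContinuousMap.dist_apply_le_dist z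
    calc |d (z, k)| = |G (cv (piece k)) z - G (k : K) z| := rfl
      _ ≤ dist (G (cv (piece k))) (G (k : K)) := this
      _ ≤ ε/4 := by rw [dist_comm]; exact hdist.le
  set db : BoundedContinuousFunction (Z × ↥E) ℝ := BoundedContinuousFunction.mkOfCompact d with hdb
  have hdbnorm : ‖db‖ ≤ ε/4 := by
    apply BoundedContinuousFunction.norm_le (by positivity) |>.mpr
    intro p
    rw [Real.norm_eq_abs]
    exact hdbound p
  -- closed embedding Z × E → Z × K
  have hce : Topology.IsClosedEmbedding (Prod.map (id : Z → Z) (Subtype.val : ↥E → K)) := by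
    constructor
    · exact Topology.IsEmbedding.id.prodMap Topology.IsEmbedding.subtypeVal
    · rw [Set.range_prodMap, Set.range_id, Subtype.range_val]
      exact isClosed_univ.prod hE
  obtain ⟨Dex, hDnorm, hDe⟩ :=
    BoundedContinuousFunction.exists_extension_norm_eq_of_isClosedEmbedding db hce
  -- the perturbed map
  have hcont0 : Continuous (fun p : Z × K => max 0 (min 1 (gr p + Dex p))) := by
    apply Continuous.max continuous_const
    exact Continuous.min continuous_const (gr.continuous.add Dex.continuous)
  have hmem0 : ∀ p : Z × K, max 0 (min 1 (gr p + Dex p)) ∈ Icc (0:ℝ) 1 :=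
    fun p => ⟨le_max_left _ _, max_le zero_le_one (min_le_left _ _)⟩
  set h : C(Z × K, unitInterval) :=
    ⟨fun p => ⟨max 0 (min 1 (gr p + Dex p)), hmem0 p⟩, hcont0.subtype_mk _⟩ with hh
  have clamp_lip : ∀ a b : ℝ, |max 0 (min 1 a) - max 0 (min 1 b)| ≤ |a - b| := by
    intro a b
    calc |max 0 (min 1 a) - max 0 (min 1 b)| = |max (min 1 a) 0 - max (min 1 b) 0| := by
          rw [max_comm 0, max_comm 0]
      _ ≤ |min 1 a - min 1 b| := abs_max_sub_max_le_abs _ _ _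
      _ ≤ max |1 - 1| |a - b| := abs_min_sub_min_le_max _ _ _ _
      _ = |a - b| := by rw [sub_self, abs_zero]; exact max_eq_right (abs_nonneg _)
  have hclamp_id : ∀ x : ℝ, x ∈ Icc (0:ℝ) 1 → max 0 (min 1 x) = x := by
    rintro x ⟨h0, h1⟩
    rw [min_eq_right h1, max_eq_right h0]
  have hgmem : ∀ p : Z × K, gr p ∈ Icc (0:ℝ) 1 := fun p => (g p).2
  refine ⟨h, ?_, ?_⟩
  · rw [ContinuousMap.dist_lt_iff hε]
    intro p
    rw [Subtype.dist_eq, Real.dist_eq]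
    have : |max 0 (min 1 (gr p + Dex p)) - gr p| ≤ |Dex p| := by
      have key := clamp_lip (gr p + Dex p) (gr p)
      rw [hclamp_id (gr p) (hgmem p)] at key
      have : gr p + Dex p - gr p = Dex p := by ring
      rwa [this] at key
    have h2 : |Dex p| ≤ ε/4 := by
      calc |Dex p| = ‖Dex p‖ := rfl
        _ ≤ ‖Dex‖ := Dex.norm_coe_le_norm p
        _ = ‖db‖ := hDnorm
        _ ≤ ε/4 := hdbnorm
    calc |(h p : ℝ) - (g p : ℝ)| ≤ |Dex p| := this
      _ ≤ ε/4 := h2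
      _ < ε := by linarith
  · intro z
    have hsub : rimg h z E ⊆ (fun v : V => gr (z, cv v)) '' (t : Set V) := by
      rintro x ⟨k, hk, rfl⟩
      set k' : ↥E := ⟨k, hk⟩ with hk'
      have hDval : Dex (z, k) = F k' z - gr (z, k) := by
        have := congrFun hDe (z, k')
        simpa [hdb, hd] using this
      have hval : gr (z, k) + Dex (z, k) = gr (z, cv (piece k')) := by
        rw [hDval]
        have : F k' z = gr (z, cv (piece k')) := rfl
        rw [← this]
        ring
      have : ((h (z, k) : ℝ)) = gr (z, cv (piece k')) := by
        show max 0 (min 1 (gr (z,k) + Dex (z,k))) = _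
        rw [hval]
        exact hclamp_id _ (hgmem (z, cv (piece k')))
      exact ⟨piece k', by simpa using hpt k', this.symm⟩
    exact Set.Finite.subset ((t : Set V).toFinite.image _) hsub


def Bad (E : Set K) (n : ℕ) : Set C(Z × K, unitInterval) :=
  {g | ∃ z : Z, ∃ a ∈ Icc (0:ℝ) 1, Icc a (a + 1/(n+1)) ⊆ rimg g z E}

lemma rimg_compact (h : C(Z × K, unitInterval)) (z : Z) {E : Set K} (hE : IsClosed E) :
    IsCompact (rimg h z E) :=
  hE.isCompact.image (continuous_subtype_val.comp (h.continuous.comp (Continuous.prodMk_right z)))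

lemma isClosed_Bad (E : Set K) (hE : IsClosed E) (n : ℕ) :
    IsClosed (Bad E n : Set C(Z × K, unitInterval)) := by
  classical
  set ℓ : ℝ := 1/(n+1) with hℓdef
  have hℓ : 0 < ℓ := by positivity
  rw [← isOpen_compl_iff, Metric.isOpen_iff]
  intro g hg
  rcases isEmpty_or_nonempty Z with hZ | hZ
  · exact ⟨1, one_pos, fun h _ => by rintro ⟨z, _⟩; exact hZ.elim z⟩
  rcases E.eq_empty_or_nonempty with rfl | hEne
  · refine ⟨1, one_pos, fun h _ hbad => ?_⟩
    obtain ⟨z, a, _, hsub⟩ := hbad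
    have : a ∈ rimg h z ∅ := hsub ⟨le_refl a, by linarith⟩
    simp [rimg] at this
  set gr : Z × K → ℝ := fun p => ((g p : ℝ)) with hgr
  have hgrc : Continuous gr := continuous_subtype_val.comp g.continuous
  have claim : ∀ p : Z × ℝ, ∃ (N : Set (Z × ℝ)) (ρ : ℝ), IsOpen N ∧ p ∈ N ∧ 0 < ρ ∧
      ∀ h : C(Z × K, unitInterval), dist h g < ρ → ∀ q ∈ N, q.2 ∈ Icc (0:ℝ) 1 →
        ¬ Icc q.2 (q.2 + ℓ) ⊆ rimg h q.1 E := by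
    rintro ⟨z₀, a₀⟩
    by_cases hp : a₀ ∈ Icc (0:ℝ) 1
    swap
    · refine ⟨univ ×ˢ (Icc (0:ℝ) 1)ᶜ, 1, isOpen_univ.prod isClosed_Icc.isOpen_compl,
        ⟨trivial, hp⟩, one_pos, ?_⟩
      rintro h _ q ⟨_, hq2⟩ hq2'
      exact absurd hq2' hq2
    · have hnb : ¬ Icc a₀ (a₀ + ℓ) ⊆ rimg g z₀ E := by
        intro hcon
        exact hg ⟨z₀, a₀, hp, hcon⟩
      have himgcl : IsClosed (rimg g z₀ E) := (rimg_compact g z₀ hE).isClosed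
      have himgne : (rimg g z₀ E).Nonempty := hEne.image _
      obtain ⟨t, htIoo, htnm⟩ : ∃ t ∈ Ioo a₀ (a₀ + ℓ), t ∉ rimg g z₀ E := by
        by_contra hcon
        push_neg at hcon
        apply hnb
        have h1 : Ioo a₀ (a₀ + ℓ) ⊆ rimg g z₀ E := hcon
        have h2 : Icc a₀ (a₀ + ℓ) = closure (Ioo a₀ (a₀ + ℓ)) :=
          (closure_Ioo (by linarith : a₀ ≠ a₀ + ℓ)).symm
        rw [h2]
        calc closure (Ioo a₀ (a₀ + ℓ)) ⊆ closure (rimg g z₀ E) := closure_mono h1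
          _ = rimg g z₀ E := himgcl.closure_eq
      set r : ℝ := infDist t (rimg g z₀ E) with hrdef
      have hr : 0 < r := (himgcl.notMem_iff_infDist_pos himgne).mp htnm
      -- tube lemma
      set Oset : Set (Z × K) := {p | |gr (p.1, p.2) - gr (z₀, p.2)| < r/3} with hOset
      have hOopen : IsOpen Oset := by
        have : Continuous fun p : Z × K => |gr (p.1, p.2) - gr (z₀, p.2)| := by
          apply Continuous.abs
          exact (hgrc.comp (continuous_fst.prodMk continuous_snd)).sub
            (hgrc.comp (continuous_const.prodMk continuous_snd))
        exact this.isOpen_preimage _ isOpen_Iio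
      have hsub0 : {z₀} ×ˢ E ⊆ Oset := by
        rintro ⟨z, k⟩ ⟨hz, hk⟩
        simp only [mem_singleton_iff] at hz
        subst hz
        simp only [hOset, mem_setOf_eq, sub_self, abs_zero]
        positivity
      obtain ⟨v, w, hvo, hwo, hzv, hEw, hvw⟩ :=
        generalized_tube_lemma isCompact_singleton hE.isCompact hOopen hsub0
      refine ⟨v ×ˢ Ioo (t - ℓ) t, r/3, hvo.prod isOpen_Ioo, ?_, by positivity, ?_⟩
      · constructor
        · exact hzv rfl
        · exact ⟨by linarith [htIoo.2], htIoo.1⟩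
      · rintro h hdist ⟨z, a⟩ ⟨hzv', haIoo⟩ _ hsubbad
        have htmem : t ∈ Icc a (a + ℓ) := ⟨haIoo.2.le, by linarith [haIoo.1]⟩
        obtain ⟨k, hkE, hkval⟩ := hsubbad htmem
        have h1 : r ≤ |t - gr (z₀, k)| := by
          rw [← Real.dist_eq]
          exact infDist_le_dist_of_mem ⟨k, hkE, rfl⟩
        have h2 : |((h (z, k) : ℝ)) - gr (z, k)| < r/3 := by
          calc |((h (z, k) : ℝ)) - gr (z, k)| = dist (h (z, k)) (g (z, k)) := by
                rw [Subtype.dist_eq, Real.dist_eq]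
            _ ≤ dist h g := ContinuousMap.dist_apply_le_dist (z, k)
            _ < r/3 := hdist
        have h3 : |gr (z, k) - gr (z₀, k)| < r/3 := by
          have := hvw (show ((z, k) : Z × K) ∈ v ×ˢ w from ⟨hzv', hEw hkE⟩)
          simpa [hOset, Set.mem_setOf_eq] using this
        have hkval' : ((h (z, k) : ℝ)) = t := hkval
        rw [← hkval'] at h1
        linarith [abs_sub_le ((h (z, k) : ℝ)) (gr (z, k)) (gr (z₀, k))]
  choose N ρ hNopen hNmem hρpos hρkey using claim
  set S : Set (Z × ℝ) := univ ×ˢ Icc (0:ℝ) 1 with hS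
  have hScpt : IsCompact S := isCompact_univ.prod isCompact_Icc
  obtain ⟨T, hTS, hTcov⟩ := hScpt.elim_nhds_subcover N (fun p _ => (hNopen p).mem_nhds (hNmem p))
  have hTne : T.Nonempty := by
    have hmem : ((Classical.arbitrary Z, 0) : Z × ℝ) ∈ S := ⟨trivial, le_refl 0, zero_le_one⟩
    obtain ⟨p, hp, _⟩ := mem_iUnion₂.mp (hTcov hmem)
    exact ⟨p, hp⟩
  set ε : ℝ := T.inf' hTne ρ with hε
  have hεpos : 0 < ε := by
    rw [hε, Finset.lt_inf'_iff]
    exact fun p _ => hρpos p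
  refine ⟨ε, hεpos, fun h hball hbad => ?_⟩
  obtain ⟨z, a, haI, hsub⟩ := hbad
  have : ((z, a) : Z × ℝ) ∈ S := ⟨trivial, haI⟩
  obtain ⟨p, hp, hpN⟩ := mem_iUnion₂.mp (hTcov this)
  have hdist : dist h g < ρ p := lt_of_lt_of_le (mem_ball.mp hball) (Finset.inf'_le _ hp)
  exact hρkey p h hdist (z, a) hpN haI hsub

end

theorem stmt6 {Z K : Type*} [TopologicalSpace Z] [CompactSpace Z] [T2Space Z]
    [TopologicalSpace K] [CompactSpace K] [T2Space K]
    (Ki : ℕ → Set K) (hcl : ∀ i, IsClosed (Ki i)) (hdim : ∀ i, coveringDimLE ↥(Ki i) 0)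
    (K0 : Set K) (hK0 : K0 = ⋃ i, Ki i) :
    IsGδ {g : C(Z × K, unitInterval) |
        ∀ z : Z, coveringDimLE ↥((fun k => g (z, k)) '' K0) 0} ∧
    Dense {g : C(Z × K, unitInterval) |
        ∀ z : Z, coveringDimLE ↥((fun k => g (z, k)) '' K0) 0} := by
  classical
  set A : ℕ → ℕ → Set C(Z × K, unitInterval) := fun i n => (Bad (Ki i) n)ᶜ with hA
  have hAopen : ∀ i n, IsOpen (A i n) := fun i n => (isClosed_Bad (Ki i) (hcl i) n).isOpen_compl
  have hAdense : ∀ i n, Dense (A i n) := by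
    intro i n
    rw [Metric.dense_iff]
    intro g r hr
    obtain ⟨h, hdist, hfin⟩ := dense_finite_img (Ki i) (hcl i) (hdim i) g hr
    refine ⟨h, mem_ball.mpr hdist, ?_⟩
    rintro ⟨z, a, haI, hsub⟩
    have h1n : (0:ℝ) < 1/((n:ℝ)+1) := by positivity
    have hlt : a < a + 1/((n:ℝ)+1) := by linarith
    exact ((Set.Icc_infinite hlt).mono hsub) (hfin z)
  have hEq : {g : C(Z × K, unitInterval) |
        ∀ z : Z, coveringDimLE ↥((fun k => g (z, k)) '' K0) 0} = ⋂ i, ⋂ n, A i n := by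
    ext g
    simp only [mem_setOf_eq, mem_iInter, hA, mem_compl_iff]
    constructor
    · intro hg i n hbad
      obtain ⟨z, a, haI, hsub⟩ := hbad
      have hd0 := (coveringDimLE_val_image_iff _).mp (hg z)
      rw [Set.image_image] at hd0
      have hKi : Ki i ⊆ K0 := hK0 ▸ Set.subset_iUnion Ki i
      have hsub2 : Icc a (a + 1/((n:ℝ)+1)) ⊆ (fun k => ((g (z, k)) : ℝ)) '' K0 :=
        hsub.trans (Set.image_mono hKi)
      have h1n : (0:ℝ) < 1/((n:ℝ)+1) := by positivity
      have hlt : a < a + 1/((n:ℝ)+1) := by linarith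
      exact not_coveringDimLE_zero_of_Icc_subset hlt hsub2 hd0
    · intro hg z
      rw [coveringDimLE_val_image_iff, Set.image_image]
      have hU : (fun k => ((g (z, k)) : ℝ)) '' K0 = ⋃ i, rimg g z (Ki i) := by
        rw [hK0, Set.image_iUnion]
        rfl
      apply coveringDimLE_zero_of_no_interval
      intro a b hab
      rw [hU]
      exact no_interval_of_forall (fun i => (rimg_compact g z (hcl i)).isClosed)
        (fun i => by rintro x ⟨k, _, rfl⟩; exact (g (z, k)).2)
        (fun i n ⟨a', ha', hs⟩ => hg i n ⟨z, a', ha', hs⟩) hab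
  rw [hEq]
  constructor
  · exact IsGδ.iInter fun i => IsGδ.iInter fun n => (hAopen i n).isGδ
  · have hre : (⋂ i, ⋂ n, A i n) = ⋂ p : ℕ × ℕ, A p.1 p.2 := by
      ext g
      simp only [mem_iInter, Prod.forall]
    rw [hre]
    exact dense_iInter_of_isOpen (fun p => hAopen p.1 p.2) (fun p => hAdense p.1 p.2)

end
end

section
/- Let M and K be compact Hausdorff spaces with dim K ≤ n and M metrizable, and let V ⊆ I^{n+1} be a nonempty open set. Then the set of all continuous maps g : M × K → I^{n+1} such that V ⊄ g({y} × K) for each y ∈ M is dense in C(M × K, I^{n+1}) with the uniform convergence topology. -/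
open Set Metric

noncomputable section

-- cube helpers
def cubeVal {m : ℕ} (x : Cube m) : EuclideanSpace ℝ (Fin m) := Subtype.val x

lemma cubeVal_mem {m : ℕ} (x : Cube m) : ∀ i, cubeVal x i ∈ Set.Icc (0:ℝ) 1 := Subtype.prop x

def cubeMk {m : ℕ} (x : EuclideanSpace ℝ (Fin m)) (h : ∀ i, x i ∈ Set.Icc (0:ℝ) 1) : Cube m :=
  Subtype.mk x h

lemma cubeVal_mk {m : ℕ} (x : EuclideanSpace ℝ (Fin m)) (h : ∀ i, x i ∈ Set.Icc (0:ℝ) 1) :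
    cubeVal (cubeMk x h) = x := rfl

lemma cubeDist {m : ℕ} (x y : Cube m) : dist x y = dist (cubeVal x) (cubeVal y) := rfl

lemma continuous_cubeMk {X : Type*} [TopologicalSpace X] {m : ℕ}
    (f : X → EuclideanSpace ℝ (Fin m)) (hf : Continuous f)
    (h : ∀ x, ∀ i, f x i ∈ Set.Icc (0:ℝ) 1) :
    Continuous fun x => cubeMk (f x) (h x) := Continuous.subtype_mk hf _

open MeasureTheory in
lemma nullhull (m : ℕ) (A : Finset (EuclideanSpace ℝ (Fin (m+1)))) (hA : A.card ≤ m + 1) :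
    volume (convexHull ℝ (A : Set (EuclideanSpace ℝ (Fin (m+1))))) = 0 := by
  classical
  have : Infinite (EuclideanSpace ℝ (Fin (m+1))) :=
    Infinite.of_injective (fun r : ℝ => (WithLp.toLp 2 (fun _ => r) : EuclideanSpace ℝ (Fin (m+1))))
      (fun a b h => congrFun (congrArg WithLp.ofLp h) 0)
  obtain ⟨B, hAB, hB⟩ := Infinite.exists_superset_card_eq A (m+1) hA
  have hsub : convexHull ℝ (A : Set (EuclideanSpace ℝ (Fin (m+1)))) ⊆
      (affineSpan ℝ (B : Set (EuclideanSpace ℝ (Fin (m+1)))) : Set _) :=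
    convexHull_min ((Finset.coe_subset.2 hAB).trans (subset_affineSpan ℝ _))
      (affineSpan ℝ _).convex
  refine measure_mono_null hsub (Measure.addHaar_affineSubspace _ _ ?_)
  intro htop
  have h1 : vectorSpan ℝ (B : Set (EuclideanSpace ℝ (Fin (m+1)))) = ⊤ := by
    have := congrArg AffineSubspace.direction htop
    rwa [AffineSubspace.direction_top, direction_affineSpan] at this
  have h2 : Module.finrank ℝ (vectorSpan ℝ (B : Set (EuclideanSpace ℝ (Fin (m+1))))) ≤ m := by
    have := finrank_vectorSpan_image_finset_le ℝ (id : EuclideanSpace ℝ (Fin (m+1)) → _) B hB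
    rwa [Finset.image_id] at this
  rw [h1] at h2
  have h3 : Module.finrank ℝ (⊤ : Submodule ℝ (EuclideanSpace ℝ (Fin (m+1)))) = m + 1 := by
    simp [finrank_euclideanSpace]
  omega

open MeasureTheory in
lemma cube_pos (m : ℕ) (W : Set (EuclideanSpace ℝ (Fin (m+1)))) (hW : IsOpen W)
    (x : EuclideanSpace ℝ (Fin (m+1))) (hx : x ∈ W) (hxc : ∀ i, x i ∈ Set.Icc (0:ℝ) 1)
    (N : Set (EuclideanSpace ℝ (Fin (m+1)))) (hN : volume N = 0) :
    ∃ e, e ∈ W ∧ (∀ i, e i ∈ Set.Icc (0:ℝ) 1) ∧ e ∉ N := by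
  classical
  set cubeSet : Set (EuclideanSpace ℝ (Fin (m+1))) := {z | ∀ i, z i ∈ Set.Icc (0:ℝ) 1}
    with hcube
  have hconv : Convex ℝ cubeSet := by
    intro a ha b hb s t hs ht hst i
    have := (convex_Icc (0:ℝ) 1) (ha i) (hb i) hs ht hst
    simpa [PiLp.add_apply, PiLp.smul_apply, smul_eq_mul] using this
  set c : EuclideanSpace ℝ (Fin (m+1)) := WithLp.toLp 2 (fun _ => (1:ℝ)/2) with hc
  have hcint : c ∈ interior cubeSet := by
    rw [mem_interior]
    refine ⟨Metric.ball c (1/2), ?_, Metric.isOpen_ball, by simp⟩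
    intro z hz i
    have h1 : dist (z i) (c i) ≤ dist z c := by
      have h2 : dist (z i) (c i) ^ 2 ≤ ∑ j, dist (z j) (c j) ^ 2 :=
        Finset.single_le_sum (f := fun j => dist (z j) (c j) ^ 2)
          (fun j _ => sq_nonneg _) (Finset.mem_univ i)
      calc dist (z i) (c i) = Real.sqrt (dist (z i) (c i) ^ 2) :=
            (Real.sqrt_sq dist_nonneg).symm
        _ ≤ Real.sqrt (∑ j, dist (z j) (c j) ^ 2) := Real.sqrt_le_sqrt h2
        _ = dist z c := (EuclideanSpace.dist_eq z c).symm
    have h3 : dist (z i) (c i) < 1/2 := lt_of_le_of_lt h1 hz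
    rw [Real.dist_eq] at h3
    have hci : c i = 1/2 := rfl
    rw [hci] at h3
    constructor <;> [linarith [abs_lt.1 h3]; linarith [abs_lt.1 h3]]
  have hcont : Continuous fun t : ℝ => t • c + (1 - t) • x := by continuity
  have hWx : ∀ᶠ t in nhds (0:ℝ), (t • c + (1 - t) • x) ∈ W := by
    have hc2 : Filter.Tendsto (fun t : ℝ => t • c + (1 - t) • x) (nhds 0) (nhds x) := by
      have h4 := hcont.continuousAt (x := (0:ℝ))
      unfold ContinuousAt at h4
      simpa using h4
    exact hc2 (hW.mem_nhds hx)
  obtain ⟨t, ht, ht0, ht1⟩ : ∃ t : ℝ, (t • c + (1 - t) • x) ∈ W ∧ 0 < t ∧ t ≤ 1 := by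
    obtain ⟨ε, hε, hball⟩ := Metric.eventually_nhds_iff.1 hWx
    refine ⟨min (ε/2) 1, hball ?_, by positivity, min_le_right _ _⟩
    rw [Real.dist_eq]
    have h5 : |min (ε/2) 1 - 0| = min (ε/2) 1 := by
      rw [sub_zero, abs_of_pos (by positivity)]
    rw [h5]
    exact lt_of_le_of_lt (min_le_left _ _) (by linarith)
  have hint : (t • c + (1 - t) • x) ∈ interior cubeSet :=
    hconv.combo_interior_closure_mem_interior (a := t) (b := 1 - t) hcint
      (subset_closure hxc) ht0 (by linarith) (by ring)
  have hpos : 0 < volume (W ∩ interior cubeSet) :=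
    (hW.inter isOpen_interior).measure_pos volume ⟨_, ht, hint⟩
  have hne : ((W ∩ interior cubeSet) \ N).Nonempty := by
    by_contra h
    rw [Set.not_nonempty_iff_eq_empty, Set.diff_eq_empty] at h
    exact absurd (measure_mono_null h hN) (ne_of_gt hpos)
  obtain ⟨e, ⟨heW, heint⟩, heN⟩ := hne
  exact ⟨e, heW, interior_subset heint, heN⟩

theorem stmt7 {M K : Type*} [TopologicalSpace M] [CompactSpace M]
    [TopologicalSpace.MetrizableSpace M]
    [TopologicalSpace K] [CompactSpace K] [T2Space K] (n : ℕ)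
    (hK : coveringDimLE K n)
    (V : Set (Cube (n+1))) (hV : IsOpen V) (hVne : V.Nonempty) :
    Dense {g : C(M × K, Cube (n+1)) |
      ∀ y : M, ¬ V ⊆ Set.range fun k : K => g (y, k)} := by
  classical
  letI : MetricSpace M := TopologicalSpace.metrizableSpaceMetric M
  rw [Metric.dense_iff]
  intro g ε hε
  set δ : ℝ := ε/8 with hδdef
  have hδ : 0 < δ := by positivity
  -- Step A: neighborhoods in M with small oscillation in the M-direction
  have hA : ∀ y : M, ∃ N : Set M, IsOpen N ∧ y ∈ N ∧
      ∀ y' ∈ N, ∀ k : K, dist (g (y', k)) (g (y, k)) ≤ δ := by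
    intro y
    have h1 : ∀ k : K, ∃ A : Set M, ∃ B : Set K, IsOpen A ∧ IsOpen B ∧ y ∈ A ∧ k ∈ B ∧
        ∀ y' ∈ A, ∀ k' ∈ B, dist (g (y', k')) (g (y, k)) ≤ δ/2 := by
      intro k
      have hc : g ⁻¹' (Metric.closedBall (g (y,k)) (δ/2)) ∈ nhds (y, k) :=
        g.continuous.continuousAt (Metric.closedBall_mem_nhds _ (by positivity))
      obtain ⟨A, B, hAo, hyA, hBo, hkB, hAB⟩ := mem_nhds_prod_iff'.1 hc
      exact ⟨A, B, hAo, hBo, hyA, hkB, fun y' hy' k' hk' => hAB ⟨hy', hk'⟩⟩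
    choose A B hAo hBo hyA hkB hd using h1
    obtain ⟨tk, htk⟩ := isCompact_univ.elim_nhds_subcover B
      (fun k _ => (hBo k).mem_nhds (hkB k))
    refine ⟨⋂ k ∈ tk, A k, isOpen_biInter_finset (fun k _ => hAo k), ?_, ?_⟩
    · exact Set.mem_biInter fun k _ => hyA k
    · intro y' hy' k
      obtain ⟨k0, hk0t, hk0⟩ := Set.mem_iUnion₂.1 (htk.2 (Set.mem_univ k))
      have hy'A : y' ∈ A k0 := Set.mem_iInter₂.1 hy' k0 hk0t
      calc dist (g (y', k)) (g (y, k))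
          ≤ dist (g (y', k)) (g (y, k0)) + dist (g (y, k)) (g (y, k0)) :=
            dist_triangle_right _ _ _
        _ ≤ δ/2 + δ/2 := add_le_add (hd k0 y' hy'A k hk0) (hd k0 y (hyA k0) k hk0)
        _ = δ := by ring
  choose N hNo hNm hNosc using hA
  obtain ⟨t, ht⟩ := isCompact_univ.elim_nhds_subcover N (fun y _ => (hNo y).mem_nhds (hNm y))
  have hcovM : (Set.univ : Set M) ⊆ ⋃ i : ↥t, N ↑i := by
    intro y hy
    obtain ⟨z, hz, hyz⟩ := Set.mem_iUnion₂.1 (ht.2 hy)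
    exact Set.mem_iUnion.2 ⟨⟨z, hz⟩, hyz⟩
  obtain ⟨lam, hlam⟩ := PartitionOfUnity.exists_isSubordinate (X := M) isClosed_univ
    (fun i : ↥t => N ↑i) (fun i => hNo ↑i) hcovM
  -- Step B: an open cover of K with small oscillation for every base point
  have hB : ∀ k : K, ∃ u : Set K, IsOpen u ∧ k ∈ u ∧
      ∀ i : ↥t, ∀ k1 ∈ u, ∀ k2 ∈ u, dist (g (↑i, k1)) (g (↑i, k2)) ≤ δ := by
    intro k
    have h1 : ∀ i : ↥t, ∃ B : Set K, IsOpen B ∧ k ∈ B ∧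
        ∀ k' ∈ B, dist (g (↑(i:↥t), k')) (g (↑i, k)) ≤ δ/2 := by
      intro i
      have hgc : Continuous fun k' : K => g (↑i, k') :=
        g.continuous.comp (Continuous.prodMk_right _)
      have hc : (fun k' : K => g (↑i, k')) ⁻¹' (Metric.closedBall (g (↑i,k)) (δ/2)) ∈
          nhds k := hgc.continuousAt (Metric.closedBall_mem_nhds _ (by positivity))
      obtain ⟨B, hBsub, hBo, hkB⟩ := mem_nhds_iff.1 hc
      exact ⟨B, hBo, hkB, fun k' hk' => hBsub hk'⟩
    choose B hBo hkB hBd using h1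
    refine ⟨⋂ i, B i, isOpen_iInter_of_finite hBo, Set.mem_iInter.2 hkB, ?_⟩
    intro i k1 hk1 k2 hk2
    calc dist (g (↑i, k1)) (g (↑i, k2))
        ≤ dist (g (↑i, k1)) (g (↑i, k)) + dist (g (↑i, k2)) (g (↑i, k)) :=
          dist_triangle_right _ _ _
      _ ≤ δ/2 + δ/2 := add_le_add (hBd i k1 (Set.mem_iInter.1 hk1 i))
          (hBd i k2 (Set.mem_iInter.1 hk2 i))
      _ = δ := by ring
  set 𝒰 : Set (Set K) :=
    {u | IsOpen u ∧ ∀ i : ↥t, ∀ k1 ∈ u, ∀ k2 ∈ u, dist (g (↑i, k1)) (g (↑i, k2)) ≤ δ}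
    with h𝒰def
  have h𝒰cov : ⋃₀ 𝒰 = Set.univ := by
    apply Set.eq_univ_of_forall
    intro k
    obtain ⟨u, huo, hku, huosc⟩ := hB k
    exact ⟨u, ⟨huo, huosc⟩, hku⟩
  obtain ⟨𝒱, h𝒱o, h𝒱cov, h𝒱ref, h𝒱ord⟩ := hK 𝒰 (fun u hu => hu.1) h𝒰cov
  have hcov2 : (Set.univ : Set K) ⊆ ⋃ v ∈ 𝒱, v := by
    rw [← Set.sUnion_eq_biUnion, h𝒱cov]
  obtain ⟨b', hb'sub, hb'fin, hb'cov⟩ :=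
    isCompact_univ.elim_finite_subcover_image (fun v hv => h𝒱o v hv) hcov2
  set S : Finset (Set K) := hb'fin.toFinset.filter (fun v => v.Nonempty) with hSdef
  have hS𝒱 : ∀ s ∈ S, s ∈ 𝒱 := by
    intro s hs
    exact hb'sub (hb'fin.mem_toFinset.1 (Finset.mem_filter.1 hs).1)
  have hSne : ∀ s ∈ S, s.Nonempty := fun s hs => (Finset.mem_filter.1 hs).2
  have hScov : ∀ k : K, ∃ s : ↥S, k ∈ (s : Set K) := by
    intro k
    obtain ⟨v, hv, hkv⟩ := Set.mem_iUnion₂.1 (hb'cov (Set.mem_univ k))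
    refine ⟨⟨v, Finset.mem_filter.2 ⟨hb'fin.mem_toFinset.2 hv, ⟨k, hkv⟩⟩⟩, hkv⟩
  have hcovK : (Set.univ : Set K) ⊆ ⋃ s : ↥S, (s : Set K) := by
    intro k _
    obtain ⟨s, hs⟩ := hScov k
    exact Set.mem_iUnion.2 ⟨s, hs⟩
  obtain ⟨φ, hφ⟩ := PartitionOfUnity.exists_isSubordinate (X := K) isClosed_univ
    (fun s : ↥S => (s : Set K)) (fun s => h𝒱o _ (hS𝒱 _ s.2)) hcovK
  choose kpt hkpt using fun s : ↥S => hSne ↑s s.2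
  -- the approximating map
  set p : ↥t → ↥S → EuclideanSpace ℝ (Fin (n+1)) :=
    fun i s => cubeVal (g (↑i, kpt s)) with hpdef
  set hraw : M × K → EuclideanSpace ℝ (Fin (n+1)) :=
    fun z => ∑ i : ↥t, ∑ s : ↥S, (lam i z.1 * φ s z.2) • p i s with hrawdef
  have hlam1 : ∀ y : M, ∑ i : ↥t, lam i y = 1 := by
    intro y
    rw [← finsum_eq_sum_of_fintype]
    exact lam.sum_eq_one (Set.mem_univ y)
  have hφ1 : ∀ k : K, ∑ s : ↥S, φ s k = 1 := by
    intro k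
    rw [← finsum_eq_sum_of_fintype]
    exact φ.sum_eq_one (Set.mem_univ k)
  have htot : ∀ z : M × K, ∑ i : ↥t, ∑ s : ↥S, lam i z.1 * φ s z.2 = 1 := by
    intro z
    rw [← Finset.sum_mul_sum, hlam1, hφ1, one_mul]
  have hwnn : ∀ (i : ↥t) (s : ↥S) (z : M × K), 0 ≤ lam i z.1 * φ s z.2 :=
    fun i s z => mul_nonneg (lam.nonneg i z.1) (φ.nonneg s z.2)
  have hmem : ∀ z : M × K, ∀ j, hraw z j ∈ Set.Icc (0:ℝ) 1 := by
    intro z j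
    have happ : hraw z j = ∑ i : ↥t, ∑ s : ↥S, (lam i z.1 * φ s z.2) * p i s j := by
      show (∑ i : ↥t, ∑ s : ↥S, (lam i z.1 * φ s z.2) • p i s) j = _
      rw [WithLp.ofLp_sum, Finset.sum_apply j Finset.univ _]
      refine Finset.sum_congr rfl fun i _ => ?_
      rw [WithLp.ofLp_sum, Finset.sum_apply j Finset.univ _]
      rfl
    rw [happ]
    constructor
    · refine Finset.sum_nonneg fun i _ => Finset.sum_nonneg fun s _ => ?_
      exact mul_nonneg (hwnn i s z) (cubeVal_mem _ j).1
    · calc ∑ i : ↥t, ∑ s : ↥S, (lam i z.1 * φ s z.2) * p i s j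
          ≤ ∑ i : ↥t, ∑ s : ↥S, lam i z.1 * φ s z.2 := by
            refine Finset.sum_le_sum fun i _ => Finset.sum_le_sum fun s _ => ?_
            exact mul_le_of_le_one_right (hwnn i s z) (cubeVal_mem _ j).2
        _ = 1 := htot z
  have hrawcont : Continuous hraw := by
    refine continuous_finset_sum _ fun i _ => continuous_finset_sum _ fun s _ => ?_
    exact (((lam i).continuous.comp continuous_fst).mul
      ((φ s).continuous.comp continuous_snd)).smul continuous_const
  set h : C(M × K, Cube (n+1)) :=
    ⟨fun z => cubeMk (hraw z) (hmem z), continuous_cubeMk hraw hrawcont hmem⟩ with hhdef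
  -- distance estimate
  have hdist : ∀ z : M × K, dist (h z) (g z) ≤ 2*δ := by
    intro z
    have hval : cubeVal (h z) = hraw z := rfl
    rw [cubeDist, hval]
    have key : ∀ (i : ↥t) (s : ↥S), lam i z.1 * φ s z.2 ≠ 0 →
        dist (p i s) (cubeVal (g z)) ≤ 2*δ := by
      intro i s hw
      have hl : lam i z.1 ≠ 0 := fun h0 => hw (by rw [h0, zero_mul])
      have hp : φ s z.2 ≠ 0 := fun h0 => hw (by rw [h0, mul_zero])
      have hz1 : z.1 ∈ N ↑i := hlam i (subset_tsupport _ hl)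
      have hz2 : z.2 ∈ (s : Set K) := hφ s (subset_tsupport _ hp)
      obtain ⟨u, hu𝒰, hsu⟩ := h𝒱ref ↑s (hS𝒱 ↑s s.2)
      have hosc := hu𝒰.2 i (kpt s) (hsu (hkpt s)) z.2 (hsu hz2)
      have hoscM := hNosc ↑i z.1 hz1 z.2
      have hps : dist (p i s) (cubeVal (g z)) =
          dist (g (↑i, kpt s)) (g (z.1, z.2)) := rfl
      rw [hps]
      calc dist (g (↑i, kpt s)) (g (z.1, z.2))
          ≤ dist (g (↑i, kpt s)) (g (↑i, z.2)) + dist (g (↑i, z.2)) (g (z.1, z.2)) :=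
            dist_triangle _ _ _
        _ ≤ δ + δ := add_le_add hosc (by rw [dist_comm]; exact hoscM)
        _ = 2*δ := by ring
    have heq : hraw z - cubeVal (g z) =
        ∑ i : ↥t, ∑ s : ↥S, (lam i z.1 * φ s z.2) • (p i s - cubeVal (g z)) := by
      have h2 : ∀ i : ↥t, ∑ s : ↥S, (lam i z.1 * φ s z.2) • (p i s - cubeVal (g z)) =
          (∑ s : ↥S, (lam i z.1 * φ s z.2) • p i s) -
          (∑ s : ↥S, lam i z.1 * φ s z.2) • cubeVal (g z) := by
        intro i
        rw [Finset.sum_smul, ← Finset.sum_sub_distrib]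
        exact Finset.sum_congr rfl fun s _ => smul_sub _ _ _
      rw [Finset.sum_congr rfl fun i _ => h2 i, Finset.sum_sub_distrib,
        ← Finset.sum_smul, htot z, one_smul]
    rw [dist_eq_norm, heq]
    calc ‖∑ i : ↥t, ∑ s : ↥S, (lam i z.1 * φ s z.2) • (p i s - cubeVal (g z))‖
        ≤ ∑ i : ↥t, ‖∑ s : ↥S, (lam i z.1 * φ s z.2) • (p i s - cubeVal (g z))‖ :=
          norm_sum_le _ _
      _ ≤ ∑ i : ↥t, ∑ s : ↥S, ‖(lam i z.1 * φ s z.2) • (p i s - cubeVal (g z))‖ :=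
          Finset.sum_le_sum fun i _ => norm_sum_le _ _
      _ ≤ ∑ i : ↥t, ∑ s : ↥S, (lam i z.1 * φ s z.2) * (2*δ) := by
          refine Finset.sum_le_sum fun i _ => Finset.sum_le_sum fun s _ => ?_
          rw [norm_smul, Real.norm_eq_abs, abs_of_nonneg (hwnn i s z)]
          rcases eq_or_ne (lam i z.1 * φ s z.2) 0 with h0 | h0
          · rw [h0, zero_mul, zero_mul]
          · refine mul_le_mul_of_nonneg_left ?_ (hwnn i s z)
            rw [← dist_eq_norm]
            exact key i s h0
      _ = (∑ i : ↥t, ∑ s : ↥S, lam i z.1 * φ s z.2) * (2*δ) := by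
          rw [Finset.sum_mul]
          refine Finset.sum_congr rfl fun i _ => ?_
          rw [Finset.sum_mul]
      _ = 2*δ := by rw [htot z, one_mul]
  -- slice property
  have hslice : ∀ y : M, ¬ V ⊆ Set.range fun k : K => h (y, k) := by
    intro y
    set q : ↥S → EuclideanSpace ℝ (Fin (n+1)) := fun s => ∑ i : ↥t, lam i y • p i s
      with hqdef
    set Tk : K → Finset ↥S := fun k => Finset.univ.filter (fun s : ↥S => k ∈ (s : Set K))
      with hTkdef
    have hcard : ∀ k : K, (Tk k).card ≤ n + 1 := by
      intro k
      have hinj : ((Tk k).image (Subtype.val : ↥S → Set K)).card = (Tk k).card :=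
        Finset.card_image_of_injective _ Subtype.val_injective
      have hsub : (((Tk k).image (Subtype.val : ↥S → Set K)) : Set (Set K)) ⊆
          {v | v ∈ 𝒱 ∧ k ∈ v} := by
        intro v hv
        simp only [Finset.coe_image, Set.mem_image, Finset.mem_coe] at hv
        obtain ⟨s, hs, rfl⟩ := hv
        have hks : k ∈ (s : Set K) := (Finset.mem_filter.1 hs).2
        exact ⟨hS𝒱 ↑s s.2, hks⟩
      calc (Tk k).card = (((Tk k).image (Subtype.val : ↥S → Set K)) : Set (Set K)).ncard := by
            rw [Set.ncard_coe_finset, hinj]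
        _ ≤ ({v | v ∈ 𝒱 ∧ k ∈ v} : Set (Set K)).ncard :=
            Set.ncard_le_ncard hsub (h𝒱ord k).1
        _ ≤ n + 1 := (h𝒱ord k).2
    have hphik : ∀ k : K, ∀ s : ↥S, s ∉ Tk k → φ s k = 0 := by
      intro k s hs
      by_contra h0
      exact hs (Finset.mem_filter.2 ⟨Finset.mem_univ s, hφ s (subset_tsupport _ h0)⟩)
    have hsum1 : ∀ k : K, ∑ s ∈ Tk k, φ s k = 1 := by
      intro k
      rw [← hφ1 k]
      exact Finset.sum_subset (Finset.subset_univ _) (fun s _ hs => hphik k s hs)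
    have hhull : ∀ k : K, hraw (y, k) ∈ convexHull ℝ (q '' ((Tk k : Finset ↥S) : Set ↥S)) := by
      intro k
      have heq1 : hraw (y, k) = ∑ s ∈ Tk k, φ s k • q s := by
        have e1 : hraw (y, k) = ∑ s : ↥S, φ s k • q s := by
          show (∑ i : ↥t, ∑ s : ↥S, (lam i y * φ s k) • p i s) = _
          rw [Finset.sum_comm]
          refine Finset.sum_congr rfl fun s _ => ?_
          rw [hqdef]
          simp only [Finset.smul_sum]
          refine Finset.sum_congr rfl fun i _ => ?_
          rw [smul_smul, mul_comm]
        rw [e1]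
        exact (Finset.sum_subset (Finset.subset_univ _)
          (fun s _ hs => by rw [hphik k s hs, zero_smul])).symm
      rw [heq1, ← Finset.centerMass_eq_of_sum_1 _ q (hsum1 k)]
      exact Finset.centerMass_mem_convexHull _ (fun s _ => φ.nonneg s k)
        (by rw [hsum1 k]; norm_num) (fun s hs => Set.mem_image_of_mem q hs)
    set N₀ : Set (EuclideanSpace ℝ (Fin (n+1))) :=
      ⋃ (T : Finset ↥S), ⋃ (_ : T.card ≤ n + 1), convexHull ℝ (q '' (T : Set ↥S)) with hN₀def
    have hN₀null : MeasureTheory.volume N₀ = 0 := by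
      refine MeasureTheory.measure_iUnion_null fun T => MeasureTheory.measure_iUnion_null
        fun hT => ?_
      have himg : q '' (T : Set ↥S) = ((T.image q : Finset (EuclideanSpace ℝ (Fin (n+1)))) :
          Set (EuclideanSpace ℝ (Fin (n+1)))) := (Finset.coe_image).symm
      rw [himg]
      exact nullhull n (T.image q) (le_trans Finset.card_image_le hT)
    obtain ⟨W, hWo, hVW⟩ := isOpen_induced_iff.1 hV
    obtain ⟨x₀, hx₀⟩ := hVne
    have hx₀W : cubeVal x₀ ∈ W := by
      rw [← hVW] at hx₀
      exact hx₀
    obtain ⟨e, heW, hec, heN⟩ := cube_pos n W hWo (cubeVal x₀) hx₀W (cubeVal_mem x₀) N₀ hN₀null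
    intro hVsub
    have hv : cubeMk e hec ∈ V := by
      rw [← hVW]
      exact heW
    obtain ⟨k, hk⟩ := hVsub hv
    have he : hraw (y, k) = e := congrArg cubeVal hk
    refine heN ?_
    rw [← he]
    refine Set.mem_iUnion.2 ⟨Tk k, Set.mem_iUnion.2 ⟨hcard k, hhull k⟩⟩
  -- assemble
  refine ⟨h, Set.mem_inter ?_ hslice⟩
  rw [Metric.mem_ball]
  rw [ContinuousMap.dist_lt_iff hε]
  intro z
  calc dist (h z) (g z) ≤ 2*δ := hdist z
    _ < ε := by rw [hδdef]; linarith
end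
end

section
/- Let f : X → Y be a perfect surjection of topological spaces, V ⊆ I^{n+1} open, and equip C(X, I^{n+1}) with the uniform convergence topology. Then the set-valued map ψ_V : Y → subsets of C(X, I^{n+1}) given by ψ_V(y) = {g : V ⊆ g(f⁻¹(y))} has closed graph; i.e., {(y,g) ∈ Y × C(X, I^{n+1}) : V ⊆ g(f⁻¹(y))} is closed in Y × C(X, I^{n+1}). -/
open Set Metric
open scoped BoundedContinuousFunction

noncomputable section

/-!
The set of pairs `(y, g)` with `v ∈ g '' f⁻¹{y}` is the image of the closed set
`{(x, g) | g x = v}` under `f × id`, which is closed because a product of proper maps is proper.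
Intersecting over `v ∈ V` gives the theorem.
-/

theorem isClosed_setOf_mem_image_fiber {X Y F K : Type*} [TopologicalSpace X]
    [TopologicalSpace Y] [TopologicalSpace F] [TopologicalSpace K] [T1Space K]
    [FunLike F X K] [ContinuousEval F X K] {f : X → Y} (hf : IsProperMap f) (v : K) :
    IsClosed {p : Y × F | v ∈ p.2 '' (f ⁻¹' {p.1})} := by
  have hclosed : IsClosed {q : X × F | q.2 q.1 = v} :=
    isClosed_singleton.preimage (continuous_eval.comp continuous_swap)
  convert (hf.prodMap isProperMap_id).isClosedMap _ hclosed using 1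
  ext ⟨y, g⟩
  simp only [mem_ofPred_eq, mem_image, mem_preimage, mem_singleton_iff, Prod.exists,
    Prod.map_apply, id_eq, Prod.mk.injEq]
  constructor
  · rintro ⟨x, rfl, hx⟩
    exact ⟨x, g, hx, rfl, rfl⟩
  · rintro ⟨x, g, hx, rfl, rfl⟩
    exact ⟨x, rfl, hx⟩

theorem stmt8_general {X Y : Type*} [TopologicalSpace X] [TopologicalSpace Y] (n : ℕ)
    (f : X → Y) (hf : IsPerfectMap f)
    (V : Set (Cube (n+1))) :
    IsClosed {p : Y × (X →ᵇ Cube (n+1)) | V ⊆ p.2 '' (f ⁻¹' {p.1})} := by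
  have hproper : IsProperMap f := isProperMap_iff_isClosedMap_and_compact_fibers.mpr hf
  have hinter : {p : Y × (X →ᵇ Cube (n+1)) | V ⊆ p.2 '' (f ⁻¹' {p.1})} =
      ⋂ v ∈ V, {p | v ∈ p.2 '' (f ⁻¹' {p.1})} := by
    ext p
    simp only [mem_ofPred_eq, mem_iInter, subset_def]
  rw [hinter]
  exact isClosed_biInter fun v _ ↦ isClosed_setOf_mem_image_fiber hproper v

theorem stmt8 {X Y : Type*} [TopologicalSpace X] [TopologicalSpace Y] (n : ℕ)
    (f : X → Y) (hf : IsPerfectMap f) (hsurj : Function.Surjective f)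
    (V : Set (Cube (n+1))) (hV : IsOpen V) :
    IsClosed {p : Y × (X →ᵇ Cube (n+1)) | V ⊆ p.2 '' (f ⁻¹' {p.1})} :=
  stmt8_general n f hf V
end
end
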